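/- arXiv:1502.05027 — 3 statements merged into one kernel-verified Lean document; each statement's English description precedes it below -/
import Mathlib

section
/- Let α < β be real numbers and let f : [α, β] × ℝ² → ℝ be twice continuously differentiable. Suppose y : [α, β] → ℝ is continuously differentiable and minimizes the functional F(z) = ∫_α^β f(x, z(x), z'(x)) dx among all continuously differentiable functions z : [α, β] → ℝ with z(α) = y(α) and z(β) = y(β). Then the function x ↦ (∂f/∂y')(x, y(x), y'(x)) is differentiable on [α, β] and the Euler–Lagrange equation (∂f/∂y)(x, y(x), y'(x)) − (d/dx)[(∂f/∂y')(x, y(x), y'(x))] = 0 holds for all x ∈ [α, β]. -/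
open MeasureTheory intervalIntegral

/-- `∂f/∂y`: partial derivative of `f (x, y, y')` with respect to its second argument. -/
noncomputable def pY (f : ℝ → ℝ → ℝ → ℝ) : ℝ → ℝ → ℝ → ℝ :=
  fun x u v => deriv (fun u' => f x u' v) u

/-- `∂f/∂y'`: partial derivative of `f (x, y, y')` with respect to its third argument. -/
noncomputable def pV (f : ℝ → ℝ → ℝ → ℝ) : ℝ → ℝ → ℝ → ℝ :=
  fun x u v => deriv (fun v' => f x u v') v

/-!
Along a variation `y + t η` with `η(α) = η(β) = 0` the action is minimal at `t = 0`, so its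
derivative there, the first variation `∫ (P η + G η')` with `P = ∂f/∂y` and `G = ∂f/∂y'` along
`y`, vanishes. Integrating by parts against `Q = ∫_α^x P` turns this into `∫ (G - Q) η' = 0` for all
such `η`, and the du Bois-Reymond lemma (test with `η = ∫_α^x (G - Q - mean)`) shows that `G - Q`
is constant. Hence `G = Q + c` is differentiable with `G' = P`; no second derivative of `y` is
needed.
-/

open Set Filter

theorem ContinuousOn.exists_continuous_eqOn_Icc {α β : Type*} [LinearOrder α]
    [TopologicalSpace α] [OrderTopology α] [TopologicalSpace β] {a b : α} (hab : a ≤ b)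
    {f : α → β} (hf : ContinuousOn f (Icc a b)) :
    ∃ g : α → β, Continuous g ∧ EqOn g f (Icc a b) :=
  ⟨IccExtend hab ((Icc a b).domRestrict f),
    (continuousOn_iff_continuous_domRestrict.mp hf).Icc_extend',
    fun _ hx => IccExtend_of_mem hab _ hx⟩

theorem intervalIntegral.hasDerivAt_integral_of_continuousOn {E : Type*}
    [NormedAddCommGroup E] [NormedSpace ℝ E] [CompleteSpace E] {a b t₀ : ℝ}
    {F F' : ℝ → ℝ → E} (hF : ∀ t, ContinuousOn (F t) (uIcc a b))
    (hF' : ContinuousOn (Function.uncurry F') (univ ×ˢ uIcc a b))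
    (hderiv : ∀ x ∈ uIcc a b, ∀ t, HasDerivAt (F · x) (F' t x) t) :
    HasDerivAt (fun t => ∫ x in a..b, F t x) (∫ x in a..b, F' t₀ x) t₀ := by
  obtain ⟨M, hM⟩ := (isCompact_closedBall t₀ 1).prod isCompact_uIcc
    |>.exists_bound_of_continuousOn (hF'.mono (prod_mono (subset_univ _) subset_rfl))
  have hF'₀ : ContinuousOn (F' t₀) (uIcc a b) :=
    hF'.comp (continuousOn_const.prodMk continuousOn_id) fun _ hx => ⟨mem_univ _, hx⟩
  exact (hasDerivAt_integral_of_dominated_loc_of_deriv_le (bound := fun _ => M)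
    (Metric.ball_mem_nhds t₀ one_pos)
    (Eventually.of_forall fun t =>
      ((hF t).mono uIoc_subset_uIcc).aestronglyMeasurable measurableSet_uIoc)
    (hF t₀).intervalIntegrable
    ((hF'₀.mono uIoc_subset_uIcc).aestronglyMeasurable measurableSet_uIoc)
    (ae_of_all _ fun x hx t ht =>
      hM (t, x) ⟨Metric.ball_subset_closedBall ht, uIoc_subset_uIcc hx⟩)
    intervalIntegrable_const
    (ae_of_all _ fun x hx t _ => hderiv x (uIoc_subset_uIcc hx) t)).2

theorem derivWithin_add_const_mul_of_differentiableAt {s : Set ℝ} {y η : ℝ → ℝ} {x : ℝ}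
    (hs : UniqueDiffWithinAt ℝ s x) (hy : DifferentiableWithinAt ℝ y s x)
    (hη : DifferentiableAt ℝ η x) (t : ℝ) :
    derivWithin (fun x => y x + t * η x) s x = derivWithin y s x + t * deriv η x :=
  (hy.hasDerivWithinAt.add (hη.hasDerivAt.hasDerivWithinAt.const_mul t)).derivWithin hs

section DuBoisReymond

variable {a b : ℝ}

theorem exists_eqOn_const_of_forall_integral_mul_deriv_eq_zero (hab : a < b) {ψ : ℝ → ℝ}
    (hψ : Continuous ψ)
    (h : ∀ η : ℝ → ℝ, ContDiff ℝ 1 η → η a = 0 → η b = 0 → ∫ x in a..b, ψ x * deriv η x = 0) :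
    ∃ c, EqOn ψ (fun _ => c) (Icc a b) := by
  set c := (∫ x in a..b, ψ x) / (b - a)
  set g := fun x => ψ x - c
  have hg : Continuous g := hψ.sub continuous_const
  have hg_int : ∫ x in a..b, g x = 0 := by
    rw [integral_sub (hψ.intervalIntegrable _ _) intervalIntegrable_const,
      intervalIntegral.integral_const, smul_eq_mul, mul_div_cancel₀ _ (sub_ne_zero.mpr hab.ne'),
      sub_self]
  set η := fun x => ∫ t in a..x, g t
  have hη : deriv η = g := funext (hg.deriv_integral g a)
  have hηC1 : ContDiff ℝ 1 η := contDiff_one_iff_deriv.mpr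
    ⟨fun x => (hg.integral_hasStrictDerivAt a x).hasDerivAt.differentiableAt, hη ▸ hg⟩
  have hψg : ∫ x in a..b, ψ x * g x = 0 := hη ▸ h η hηC1 integral_same hg_int
  have hgg : ∫ x in a..b, g x * g x = 0 := calc
    ∫ x in a..b, g x * g x = ∫ x in a..b, (ψ x * g x - c * g x) :=
      integral_congr fun x _ => by simp only [g]; ring
    _ = 0 := by
      rw [integral_sub ((hψ.fun_mul hg).intervalIntegrable _ _)
        ((continuous_const.fun_mul hg).intervalIntegrable _ _),
        intervalIntegral.integral_const_mul, hψg, hg_int]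
      ring
  refine ⟨c, fun x hx => ?_⟩
  by_contra hne
  have := integral_pos hab (hg.fun_mul hg).continuousOn (fun x _ => mul_self_nonneg (g x))
    ⟨x, hx, mul_self_pos.mpr (sub_ne_zero.mpr hne)⟩
  linarith

theorem hasDerivWithinAt_of_forall_integral_eq_zero (hab : a < b) {P G : ℝ → ℝ}
    (hP : Continuous P) (hG : Continuous G)
    (h : ∀ η : ℝ → ℝ, ContDiff ℝ 1 η → η a = 0 → η b = 0 →
      ∫ x in a..b, (P x * η x + G x * deriv η x) = 0)
    {x : ℝ} (hx : x ∈ Icc a b) :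
    HasDerivWithinAt G (P x) (Icc a b) x := by
  set Q := fun x => ∫ t in a..x, P t
  have hQ : ∀ x, HasDerivAt Q (P x) x := fun x => (hP.integral_hasStrictDerivAt a x).hasDerivAt
  have hQc : Continuous Q := continuous_iff_continuousAt.mpr fun x => (hQ x).continuousAt
  obtain ⟨c, hc⟩ : ∃ c, EqOn (fun x => G x - Q x) (fun _ => c) (Icc a b) := by
    refine exists_eqOn_const_of_forall_integral_mul_deriv_eq_zero hab (hG.sub hQc)
      fun η hη hηa hηb => ?_
    have hη' : Continuous (deriv η) := hη.continuous_deriv le_rfl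
    have hparts : ∫ x in a..b, Q x * deriv η x = -∫ x in a..b, P x * η x := by
      rw [integral_mul_deriv_eq_deriv_mul (fun x _ => hQ x)
        (fun x _ => (hη.differentiable one_ne_zero x).hasDerivAt)
        (hP.intervalIntegrable _ _) (hη'.intervalIntegrable _ _), hηa, hηb]
      ring
    simp only [sub_mul]
    rw [integral_sub ((hG.fun_mul hη').intervalIntegrable _ _)
      ((hQc.fun_mul hη').intervalIntegrable _ _),
      hparts, ← h η hη hηa hηb, integral_add ((hP.fun_mul hη.continuous).intervalIntegrable _ _)
        ((hG.fun_mul hη').intervalIntegrable _ _)]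
    ring
  have hGQ : ∀ x ∈ Icc a b, G x = Q x + c := fun x hx => by linarith [hc hx]
  exact ((hQ x).hasDerivWithinAt.add_const c).congr hGQ (hGQ x hx)

theorem hasDerivWithinAt_of_forall_integral_eq_zero_of_continuousOn (hab : a < b)
    {P G : ℝ → ℝ} (hP : ContinuousOn P (Icc a b)) (hG : ContinuousOn G (Icc a b))
    (h : ∀ η : ℝ → ℝ, ContDiff ℝ 1 η → η a = 0 → η b = 0 →
      ∫ x in a..b, (P x * η x + G x * deriv η x) = 0)
    {x : ℝ} (hx : x ∈ Icc a b) :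
    HasDerivWithinAt G (P x) (Icc a b) x := by
  obtain ⟨P', hP', hPP'⟩ := hP.exists_continuous_eqOn_Icc hab.le
  obtain ⟨G', hG', hGG'⟩ := hG.exists_continuous_eqOn_Icc hab.le
  have h' : ∀ η : ℝ → ℝ, ContDiff ℝ 1 η → η a = 0 → η b = 0 →
      ∫ x in a..b, (P' x * η x + G' x * deriv η x) = 0 := fun η hη hηa hηb => by
    rw [← h η hη hηa hηb]
    refine integral_congr fun y hy => ?_
    rw [uIcc_of_le hab.le] at hy
    rw [hPP' hy, hGG' hy]
  rw [← hPP' hx]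
  exact (hasDerivWithinAt_of_forall_integral_eq_zero hab hP' hG' h' hx).congr
    (fun y hy => (hGG' hy).symm) (hGG' hx).symm

end DuBoisReymond

def uncurry₃ (f : ℝ → ℝ → ℝ → ℝ) (p : ℝ × ℝ × ℝ) : ℝ := f p.1 p.2.1 p.2.2

section PartialDerivatives

variable {f : ℝ → ℝ → ℝ → ℝ} {s : Set ℝ} {x : ℝ}

theorem pY_eq_fderivWithin (hf : DifferentiableOn ℝ (uncurry₃ f) (s ×ˢ univ)) (hx : x ∈ s)
    (u v : ℝ) : pY f x u v = fderivWithin ℝ (uncurry₃ f) (s ×ˢ univ) (x, u, v) (0, 1, 0) :=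
  ((hf _ ⟨hx, trivial⟩).hasFDerivWithinAt.comp_hasDerivAt u
    ((hasDerivAt_const u x).prodMk ((hasDerivAt_id u).prodMk (hasDerivAt_const u v)))
    (Eventually.of_forall fun _ => ⟨hx, trivial⟩)).deriv

theorem pV_eq_fderivWithin (hf : DifferentiableOn ℝ (uncurry₃ f) (s ×ˢ univ)) (hx : x ∈ s)
    (u v : ℝ) : pV f x u v = fderivWithin ℝ (uncurry₃ f) (s ×ˢ univ) (x, u, v) (0, 0, 1) :=
  ((hf _ ⟨hx, trivial⟩).hasFDerivWithinAt.comp_hasDerivAt v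
    ((hasDerivAt_const v x).prodMk ((hasDerivAt_const v u).prodMk (hasDerivAt_id v)))
    (Eventually.of_forall fun _ => ⟨hx, trivial⟩)).deriv

theorem fderivWithin_uncurry₃_apply_zero_prod
    (hf : DifferentiableOn ℝ (uncurry₃ f) (s ×ˢ univ)) (hx : x ∈ s) (u v p q : ℝ) :
    fderivWithin ℝ (uncurry₃ f) (s ×ˢ univ) (x, u, v) (0, p, q) =
      pY f x u v * p + pV f x u v * q := by
  have hsplit : ((0 : ℝ), p, q) =
      p • ((0 : ℝ), (1 : ℝ), (0 : ℝ)) + q • ((0 : ℝ), (0 : ℝ), (1 : ℝ)) := by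
    simp
  rw [hsplit, map_add, map_smul, map_smul, pY_eq_fderivWithin hf hx, pV_eq_fderivWithin hf hx,
    smul_eq_mul, smul_eq_mul, mul_comm p, mul_comm q]

theorem continuousOn_pY_comp (hf : ContDiffOn ℝ 1 (uncurry₃ f) (s ×ˢ univ))
    (hs : UniqueDiffOn ℝ s) {u v : ℝ → ℝ} (hu : ContinuousOn u s) (hv : ContinuousOn v s) :
    ContinuousOn (fun x => pY f x (u x) (v x)) s :=
  (((hf.continuousOn_fderivWithin (hs.prod uniqueDiffOn_univ) le_rfl).comp
    (continuousOn_id.prodMk (hu.prodMk hv)) fun _ hx => ⟨hx, trivial⟩).clm_apply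
    continuousOn_const).congr fun _ hx =>
      pY_eq_fderivWithin (hf.differentiableOn one_ne_zero) hx _ _

theorem continuousOn_pV_comp (hf : ContDiffOn ℝ 1 (uncurry₃ f) (s ×ˢ univ))
    (hs : UniqueDiffOn ℝ s) {u v : ℝ → ℝ} (hu : ContinuousOn u s) (hv : ContinuousOn v s) :
    ContinuousOn (fun x => pV f x (u x) (v x)) s :=
  (((hf.continuousOn_fderivWithin (hs.prod uniqueDiffOn_univ) le_rfl).comp
    (continuousOn_id.prodMk (hu.prodMk hv)) fun _ hx => ⟨hx, trivial⟩).clm_apply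
    continuousOn_const).congr fun _ hx =>
      pV_eq_fderivWithin (hf.differentiableOn one_ne_zero) hx _ _

end PartialDerivatives

theorem hasDerivAt_integral_variation {a b : ℝ} (hab : a < b) {f : ℝ → ℝ → ℝ → ℝ}
    (hf : ContDiffOn ℝ 1 (uncurry₃ f) (Icc a b ×ˢ univ)) {y y' η η' : ℝ → ℝ}
    (hy : ContinuousOn y (Icc a b)) (hy' : ContinuousOn y' (Icc a b))
    (hη : ContinuousOn η (Icc a b)) (hη' : ContinuousOn η' (Icc a b)) :
    HasDerivAt (fun t => ∫ x in a..b, f x (y x + t * η x) (y' x + t * η' x))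
      (∫ x in a..b, (pY f x (y x) (y' x) * η x + pV f x (y x) (y' x) * η' x)) 0 := by
  have hS : UniqueDiffOn ℝ (Icc a b ×ˢ (univ : Set (ℝ × ℝ))) :=
    (uniqueDiffOn_Icc hab).prod uniqueDiffOn_univ
  rw [← uIcc_of_le hab.le] at hf hy hy' hη hη' hS
  set S := uIcc a b ×ˢ (univ : Set (ℝ × ℝ))
  have hdiff : DifferentiableOn ℝ (uncurry₃ f) S := hf.differentiableOn one_ne_zero
  set D := fderivWithin ℝ (uncurry₃ f) S
  set γ : ℝ → ℝ → ℝ × ℝ × ℝ := fun t x => (x, y x + t * η x, y' x + t * η' x)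
  have hγS : ∀ t, ∀ x ∈ uIcc a b, γ t x ∈ S := fun _ _ hx => ⟨hx, trivial⟩
  have hsnd : MapsTo (Prod.snd : ℝ × ℝ → ℝ) (univ ×ˢ uIcc a b) (uIcc a b) := fun _ hp => hp.2
  have hγ : ContinuousOn (Function.uncurry γ) (univ ×ˢ uIcc a b) :=
    continuousOn_snd.prodMk
      (((hy.comp continuousOn_snd hsnd).add
          (continuousOn_fst.mul (hη.comp continuousOn_snd hsnd))).prodMk
        ((hy'.comp continuousOn_snd hsnd).add
          (continuousOn_fst.mul (hη'.comp continuousOn_snd hsnd))))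
  have hline : ∀ x t, HasDerivAt (γ · x) (0, η x, η' x) t := fun x t =>
    (hasDerivAt_const t x).prodMk (((hasDerivAt_mul_const (η x)).const_add (y x)).prodMk
      ((hasDerivAt_mul_const (η' x)).const_add (y' x)))
  refine (hasDerivAt_integral_of_continuousOn (t₀ := 0)
    (F := fun t x => uncurry₃ f (γ t x)) (F' := fun t x => D (γ t x) (0, η x, η' x))
    (fun t => hf.continuousOn.comp (hγ.comp (continuousOn_const.prodMk continuousOn_id)
      fun _ hx => ⟨mem_univ t, hx⟩) (hγS t))
    (((hf.continuousOn_fderivWithin hS le_rfl).comp hγ fun p hp => hγS p.1 p.2 hp.2).clm_apply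
      (continuousOn_const.prodMk ((hη.comp continuousOn_snd hsnd).prodMk
        (hη'.comp continuousOn_snd hsnd))))
    (fun x hx t => HasFDerivWithinAt.comp_hasDerivAt (l := uncurry₃ f) t
      (hdiff _ (hγS t x hx)).hasFDerivWithinAt (hline x t)
      (Eventually.of_forall fun t => hγS t x hx))).congr_deriv ?_
  refine integral_congr fun x hx => ?_
  simp only [γ, D, zero_mul, add_zero]
  exact fderivWithin_uncurry₃_apply_zero_prod hdiff hx _ _ _ _

/-- **Euler–Lagrange equation.** If `f : [α, β] × ℝ² → ℝ` is `C²` and the `C¹` function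
`y` minimizes `F(z) = ∫_α^β f (x, z x, z' x) dx` among `C¹` functions `z` with the same
boundary values, then `x ↦ (∂f/∂y')(x, y x, y' x)` is differentiable on `[α, β]` and
`(∂f/∂y)(x, y x, y' x) - d/dx [(∂f/∂y')(x, y x, y' x)] = 0` on `[α, β]`. -/
theorem euler_lagrange_equation
    (α β : ℝ) (hαβ : α < β) (f : ℝ → ℝ → ℝ → ℝ)
    (hf : ContDiffOn ℝ 2 (fun p : ℝ × ℝ × ℝ => f p.1 p.2.1 p.2.2)
      ((Set.Icc α β) ×ˢ (Set.univ : Set (ℝ × ℝ))))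
    (y : ℝ → ℝ) (hy : ContDiffOn ℝ 1 y (Set.Icc α β))
    (hmin : ∀ z : ℝ → ℝ, ContDiffOn ℝ 1 z (Set.Icc α β) → z α = y α → z β = y β →
      (∫ x in α..β, f x (y x) (derivWithin y (Set.Icc α β) x)) ≤
        (∫ x in α..β, f x (z x) (derivWithin z (Set.Icc α β) x))) :
    DifferentiableOn ℝ
        (fun x => pV f x (y x) (derivWithin y (Set.Icc α β) x)) (Set.Icc α β) ∧
      ∀ x ∈ Set.Icc α β,
        pY f x (y x) (derivWithin y (Set.Icc α β) x) -
          derivWithin (fun x' => pV f x' (y x') (derivWithin y (Set.Icc α β) x'))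
            (Set.Icc α β) x = 0 := by
  set s := Icc α β
  have hs : UniqueDiffOn ℝ s := uniqueDiffOn_Icc hαβ
  have hf₁ : ContDiffOn ℝ 1 (uncurry₃ f) (s ×ˢ univ) := hf.of_le one_le_two
  have hy' : ContinuousOn (derivWithin y s) s := hy.continuousOn_derivWithin hs le_rfl
  have hvariation : ∀ η : ℝ → ℝ, ContDiff ℝ 1 η → η α = 0 → η β = 0 →
      ∫ x in α..β, (pY f x (y x) (derivWithin y s x) * η x +
        pV f x (y x) (derivWithin y s x) * deriv η x) = 0 := by
    intro η hη hηα hηβ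
    refine IsLocalMin.hasDerivAt_eq_zero (Eventually.of_forall fun t => ?_)
      (hasDerivAt_integral_variation hαβ hf₁ hy.continuousOn hy'
        hη.continuous.continuousOn (hη.continuous_deriv le_rfl).continuousOn)
    simp only [zero_mul, add_zero]
    calc _ ≤ _ := hmin (fun x => y x + t * η x) (hy.add (contDiff_const.mul hη).contDiffOn)
          (by simp [hηα]) (by simp [hηβ])
      _ = _ := integral_congr fun x hx => by
        rw [uIcc_of_le hαβ.le] at hx
        rw [derivWithin_add_const_mul_of_differentiableAt (hs x hx)
          (hy.differentiableOn one_ne_zero x hx) (hη.differentiable one_ne_zero x)]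
  have hEL : ∀ x ∈ s, HasDerivWithinAt (fun x => pV f x (y x) (derivWithin y s x))
      (pY f x (y x) (derivWithin y s x)) s x :=
    fun x hx => hasDerivWithinAt_of_forall_integral_eq_zero_of_continuousOn hαβ
      (continuousOn_pY_comp hf₁ hs hy.continuousOn hy')
      (continuousOn_pV_comp hf₁ hs hy.continuousOn hy') hvariation hx
  exact ⟨fun x hx => (hEL x hx).differentiableWithinAt,
    fun x hx => by rw [(hEL x hx).derivWithin (hs x hx), sub_self]⟩
end

section
/- Let α < β be real numbers, let f : [α, β] × ℝ² → ℝ be twice continuously differentiable, let y : [α, β] → ℝ be continuously differentiable and minimize the functional F(z) = ∫_α^β f(x, z(x), z'(x)) dx among all continuously differentiable functions z : [α, β] → ℝ with z(α) = y(α) and z(β) = y(β). Then for every twice continuously differentiable φ : [α, β] → ℝ with φ(α) = φ(β) = 0, one has ∫_α^β [ (∂²f/∂y²)(x, y(x), y'(x)) φ(x)² + 2 (∂²f/∂y∂y')(x, y(x), y'(x)) φ(x) φ'(x) + (∂²f/∂y'²)(x, y(x), y'(x)) φ'(x)² ] dx ≥ 0. -/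
open MeasureTheory intervalIntegral

/-!
Along the variation `y + t φ` the action `Φ t = ∫ f (x, y + t φ, y' + t φ')` is minimal at
`t = 0`, so the second symmetric difference quotients `(Φ t + Φ (-t) - 2 Φ 0) / t²` are
nonnegative. Pointwise in `x` they converge to the second `t`-derivative of the integrand at
`t = 0`, which is the Hessian of `f` (symmetric, as `f` is `C²`) evaluated on `(0, φ, φ')`, and
the mean value theorem together with compactness of `[α, β] × [-1, 1]` bounds them uniformly,
so dominated convergence passes to the limit. Difference quotients avoid differentiating `Φ`
twice under the integral sign.
-/

open Set Filter Topology

section SymmSecondDiff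

variable {g g' g'' : ℝ → ℝ}

theorem hasDerivAt_symmSecondDiff (hg : ∀ t, HasDerivAt g (g' t) t) (t : ℝ) :
    HasDerivAt (fun s => g s + g (-s) - 2 * g 0) (g' t - g' (-t)) t := by
  simpa [sub_eq_add_neg] using
    ((hg t).add ((hg (-t)).scomp t (hasDerivAt_neg t))).sub_const (2 * g 0)

theorem tendsto_symmSecondDiff_div_sq {c : ℝ} (hg : ∀ t, HasDerivAt g (g' t) t)
    (hg' : HasDerivAt g' c 0) :
    Tendsto (fun t => (g t + g (-t) - 2 * g 0) / t ^ 2) (𝓝[≠] 0) (𝓝 c) := by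
  have hslope := hasDerivAt_iff_tendsto_slope.1 hg'
  have hslope_neg := hasDerivAt_iff_tendsto_slope.1
    (hg'.scomp_of_eq 0 (hasDerivAt_neg 0) neg_zero.symm)
  have hquot : Tendsto (fun t => (g' t - g' (-t)) / (2 * t)) (𝓝[≠] 0) (𝓝 c) := by
    have h := (hslope.sub hslope_neg).div_const 2
    rw [show (c - (-1 : ℝ) • c) / 2 = c by simp] at h
    refine h.congr' (eventually_nhdsWithin_of_forall fun t (ht : t ≠ 0) => ?_)
    simp only [slope_def_field, Function.comp_apply, sub_zero, neg_zero]
    field_simp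
    ring
  have hnum := hasDerivAt_symmSecondDiff hg
  refine HasDerivAt.lhopital_zero_nhdsNE (Eventually.of_forall hnum)
    (Eventually.of_forall fun t => by simpa using hasDerivAt_pow 2 t)
    (eventually_nhdsWithin_of_forall fun t (ht : t ≠ 0) => mul_ne_zero two_ne_zero ht)
    ?_ ?_ hquot
  · have h := (hnum 0).continuousAt.tendsto
    rw [show g 0 + g (-0) - 2 * g 0 = 0 by rw [neg_zero]; ring] at h
    exact h.mono_left nhdsWithin_le_nhds
  · simpa using ((continuous_pow 2).tendsto (0 : ℝ)).mono_left nhdsWithin_le_nhds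

theorem abs_symmSecondDiff_le {r M t : ℝ} (hg : ∀ s, HasDerivAt g (g' s) s)
    (hg' : ∀ s ∈ Icc (-r) r, HasDerivAt g' (g'' s) s) (hM : ∀ s ∈ Icc (-r) r, |g'' s| ≤ M)
    (ht : |t| ≤ r) : |g t + g (-t) - 2 * g 0| ≤ 2 * M * t ^ 2 := by
  have hr : 0 ≤ r := (abs_nonneg t).trans ht
  have hM0 : 0 ≤ M := (abs_nonneg _).trans (hM 0 ⟨by linarith, hr⟩)
  have hlip : ∀ s ∈ Icc (-r) r, |g' s - g' 0| ≤ M * |s| := fun s hs => by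
    simpa using (convex_Icc (-r) r).norm_image_sub_le_of_norm_hasDerivWithin_le
      (fun s hs => (hg' s hs).hasDerivWithinAt) hM ⟨by linarith, hr⟩ hs
  have hsub : Icc (-|t|) |t| ⊆ Icc (-r) r := Icc_subset_Icc (neg_le_neg ht) ht
  have hnum' : ∀ s ∈ Icc (-|t|) |t|, ‖g' s - g' (-s)‖ ≤ 2 * M * |t| := fun s hs => by
    have hs' : |s| ≤ |t| := abs_le.2 hs
    have hns : -s ∈ Icc (-r) r := hsub ⟨by linarith [hs.2], by linarith [hs.1]⟩
    calc ‖g' s - g' (-s)‖ = |(g' s - g' 0) - (g' (-s) - g' 0)| := by rw [Real.norm_eq_abs]; ring_nf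
      _ ≤ M * |s| + M * |-s| := (abs_sub _ _).trans (add_le_add (hlip s (hsub hs)) (hlip _ hns))
      _ ≤ 2 * M * |t| := by rw [abs_neg]; nlinarith
  have hnum := hasDerivAt_symmSecondDiff hg
  have h := (convex_Icc (-|t|) |t|).norm_image_sub_le_of_norm_hasDerivWithin_le
    (fun s _ => (hnum s).hasDerivWithinAt) hnum' ⟨neg_nonpos.2 (abs_nonneg t), abs_nonneg t⟩
    ⟨neg_abs_le t, le_abs_self t⟩
  simp only [neg_zero, Real.norm_eq_abs, sub_zero] at h
  calc |g t + g (-t) - 2 * g 0| = |g t + g (-t) - 2 * g 0 - (g 0 + g 0 - 2 * g 0)| := by ring_nf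
    _ ≤ 2 * M * |t| * |t| := h
    _ = 2 * M * t ^ 2 := by rw [mul_assoc, abs_mul_abs_self, sq]

end SymmSecondDiff

theorem integral_secondDeriv_nonneg_of_forall_integral_le {α β M : ℝ} {G G' G'' : ℝ → ℝ → ℝ}
    (hint : ∀ t, IntervalIntegrable (G t) volume α β)
    (hG : ∀ x ∈ uIcc α β, ∀ t, HasDerivAt (G · x) (G' t x) t)
    (hG' : ∀ x ∈ uIcc α β, ∀ t, HasDerivAt (G' · x) (G'' t x) t)
    (hM : ∀ x ∈ uIcc α β, ∀ t ∈ Icc (-1) 1, |G'' t x| ≤ M)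
    (hmin : ∀ t, ∫ x in α..β, G 0 x ≤ ∫ x in α..β, G t x) :
    0 ≤ ∫ x in α..β, G'' 0 x := by
  set D : ℝ → ℝ → ℝ := fun t x => (G t x + G (-t) x - 2 * G 0 x) / t ^ 2
  have hDint : ∀ t, IntervalIntegrable (D t) volume α β := fun t =>
    (((hint t).add (hint (-t))).sub ((hint 0).const_mul 2)).div_const _
  have hD_nonneg : ∀ t, 0 ≤ ∫ x in α..β, D t x := fun t => by
    rw [intervalIntegral.integral_div, integral_sub ((hint t).add (hint (-t)))
      ((hint 0).const_mul 2), integral_add (hint t) (hint (-t)),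
      intervalIntegral.integral_const_mul]
    exact div_nonneg (by linarith [hmin t, hmin (-t)]) (sq_nonneg t)
  have hD_bound : ∀ᶠ t in 𝓝[≠] (0 : ℝ), ∀ᵐ x, x ∈ uIoc α β → ‖D t x‖ ≤ 2 * M := by
    have hsmall : ∀ᶠ t in 𝓝[≠] (0 : ℝ), |t| ≤ 1 := nhdsWithin_le_nhds <| by
      filter_upwards [Metric.closedBall_mem_nhds (0 : ℝ) one_pos] with t ht
      simpa using ht
    filter_upwards [hsmall, self_mem_nhdsWithin] with t ht (ht0 : t ≠ 0)
    refine ae_of_all _ fun x hx => ?_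
    have hx' := uIoc_subset_uIcc hx
    rw [Real.norm_eq_abs, abs_div, abs_sq, div_le_iff₀ (by positivity)]
    exact abs_symmSecondDiff_le (hG x hx') (fun s _ => hG' x hx' s) (hM x hx') ht
  have hD_lim : Tendsto (fun t => ∫ x in α..β, D t x) (𝓝[≠] 0) (𝓝 (∫ x in α..β, G'' 0 x)) :=
    tendsto_integral_filter_of_dominated_convergence (fun _ => 2 * M)
      (Eventually.of_forall fun t => (hDint t).aestronglyMeasurable_restrict_uIoc) hD_bound
      intervalIntegrable_const
      (ae_of_all _ fun x hx => tendsto_symmSecondDiff_div_sq (hG x (uIoc_subset_uIcc hx))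
        (hG' x (uIoc_subset_uIcc hx) 0))
  exact ge_of_tendsto hD_lim (Eventually.of_forall hD_nonneg)

theorem DifferentiableWithinAt.hasDerivAt_comp_prodMk_const {E F : Type*} [NormedAddCommGroup E]
    [NormedSpace ℝ E] [NormedAddCommGroup F] [NormedSpace ℝ F] {Ψ : ℝ × E → F} {s : Set ℝ}
    {x t : ℝ} {c : ℝ → E} {c' : E} (hΨ : DifferentiableWithinAt ℝ Ψ (s ×ˢ univ) (x, c t))
    (hx : x ∈ s) (hc : HasDerivAt c c' t) :
    HasDerivAt (fun τ => Ψ (x, c τ)) (fderivWithin ℝ Ψ (s ×ˢ univ) (x, c t) (0, c')) t := by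
  have h := hΨ.hasFDerivWithinAt.comp_hasDerivWithinAt t
    ((hasDerivAt_const t x).prodMk hc).hasDerivWithinAt (s := univ)
    (fun τ _ => mk_mem_prod hx (mem_univ (c τ)))
  rwa [hasDerivWithinAt_univ] at h

section Lagrangian

variable {α β : ℝ} {f : ℝ → ℝ → ℝ → ℝ}

noncomputable def lagrangianFDeriv (α β : ℝ) (f : ℝ → ℝ → ℝ → ℝ) :
    ℝ × ℝ × ℝ → (ℝ × ℝ × ℝ) →L[ℝ] ℝ :=
  fderivWithin ℝ (fun p : ℝ × ℝ × ℝ => f p.1 p.2.1 p.2.2) (Icc α β ×ˢ univ)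

noncomputable def lagrangianHessian (α β : ℝ) (f : ℝ → ℝ → ℝ → ℝ) :
    ℝ × ℝ × ℝ → (ℝ × ℝ × ℝ) →L[ℝ] (ℝ × ℝ × ℝ) →L[ℝ] ℝ :=
  fderivWithin ℝ (lagrangianFDeriv α β f) (Icc α β ×ˢ univ)

theorem hasDerivAt_lagrangian_comp
    (hf : ContDiffOn ℝ 2 (fun p : ℝ × ℝ × ℝ => f p.1 p.2.1 p.2.2) (Icc α β ×ˢ univ))
    {x t : ℝ} (hx : x ∈ Icc α β) {c : ℝ → ℝ × ℝ} {c' : ℝ × ℝ} (hc : HasDerivAt c c' t) :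
    HasDerivAt (fun τ => f x (c τ).1 (c τ).2) (lagrangianFDeriv α β f (x, c t) (0, c')) t :=
  (hf.differentiableOn two_ne_zero (x, c t) ⟨hx, trivial⟩).hasDerivAt_comp_prodMk_const hx hc

theorem hasDerivAt_lagrangianFDeriv_comp_apply (hαβ : α < β)
    (hf : ContDiffOn ℝ 2 (fun p : ℝ × ℝ × ℝ => f p.1 p.2.1 p.2.2) (Icc α β ×ˢ univ))
    {x t : ℝ} (hx : x ∈ Icc α β) {c : ℝ → ℝ × ℝ} {c' : ℝ × ℝ} (hc : HasDerivAt c c' t)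
    (w : ℝ × ℝ × ℝ) :
    HasDerivAt (fun τ => lagrangianFDeriv α β f (x, c τ) w)
      (lagrangianHessian α β f (x, c t) (0, c') w) t := by
  have hS : UniqueDiffOn ℝ (Icc α β ×ˢ (univ : Set (ℝ × ℝ))) :=
    (uniqueDiffOn_Icc hαβ).prod uniqueDiffOn_univ
  have hf' := (hf.fderivWithin hS (by norm_num)).differentiableOn one_ne_zero (x, c t) ⟨hx, trivial⟩
  have h := (hf'.hasDerivAt_comp_prodMk_const hx hc).clm_apply (hasDerivAt_const t w)
  rwa [map_zero, add_zero] at h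

theorem pY_eq_lagrangianFDeriv
    (hf : ContDiffOn ℝ 2 (fun p : ℝ × ℝ × ℝ => f p.1 p.2.1 p.2.2) (Icc α β ×ˢ univ))
    {x : ℝ} (hx : x ∈ Icc α β) (u v : ℝ) :
    pY f x u v = lagrangianFDeriv α β f (x, u, v) (0, 1, 0) :=
  (hasDerivAt_lagrangian_comp hf hx ((hasDerivAt_id u).prodMk (hasDerivAt_const u v))).deriv

theorem pV_eq_lagrangianFDeriv
    (hf : ContDiffOn ℝ 2 (fun p : ℝ × ℝ × ℝ => f p.1 p.2.1 p.2.2) (Icc α β ×ˢ univ))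
    {x : ℝ} (hx : x ∈ Icc α β) (u v : ℝ) :
    pV f x u v = lagrangianFDeriv α β f (x, u, v) (0, 0, 1) :=
  (hasDerivAt_lagrangian_comp hf hx ((hasDerivAt_const v u).prodMk (hasDerivAt_id v))).deriv

theorem pY_pY_eq_lagrangianHessian (hαβ : α < β)
    (hf : ContDiffOn ℝ 2 (fun p : ℝ × ℝ × ℝ => f p.1 p.2.1 p.2.2) (Icc α β ×ˢ univ))
    {x : ℝ} (hx : x ∈ Icc α β) (u v : ℝ) :
    pY (pY f) x u v = lagrangianHessian α β f (x, u, v) (0, 1, 0) (0, 1, 0) := by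
  change deriv (fun u' => pY f x u' v) u = _
  simp only [pY_eq_lagrangianFDeriv hf hx]
  exact (hasDerivAt_lagrangianFDeriv_comp_apply hαβ hf hx
    ((hasDerivAt_id u).prodMk (hasDerivAt_const u v)) _).deriv

theorem pY_pV_eq_lagrangianHessian (hαβ : α < β)
    (hf : ContDiffOn ℝ 2 (fun p : ℝ × ℝ × ℝ => f p.1 p.2.1 p.2.2) (Icc α β ×ˢ univ))
    {x : ℝ} (hx : x ∈ Icc α β) (u v : ℝ) :
    pY (pV f) x u v = lagrangianHessian α β f (x, u, v) (0, 1, 0) (0, 0, 1) := by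
  change deriv (fun u' => pV f x u' v) u = _
  simp only [pV_eq_lagrangianFDeriv hf hx]
  exact (hasDerivAt_lagrangianFDeriv_comp_apply hαβ hf hx
    ((hasDerivAt_id u).prodMk (hasDerivAt_const u v)) _).deriv

theorem pV_pV_eq_lagrangianHessian (hαβ : α < β)
    (hf : ContDiffOn ℝ 2 (fun p : ℝ × ℝ × ℝ => f p.1 p.2.1 p.2.2) (Icc α β ×ˢ univ))
    {x : ℝ} (hx : x ∈ Icc α β) (u v : ℝ) :
    pV (pV f) x u v = lagrangianHessian α β f (x, u, v) (0, 0, 1) (0, 0, 1) := by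
  change deriv (fun v' => pV f x u v') v = _
  simp only [pV_eq_lagrangianFDeriv hf hx]
  exact (hasDerivAt_lagrangianFDeriv_comp_apply hαβ hf hx
    ((hasDerivAt_const v u).prodMk (hasDerivAt_id v)) _).deriv

theorem lagrangianHessian_symm (hαβ : α < β)
    (hf : ContDiffOn ℝ 2 (fun p : ℝ × ℝ × ℝ => f p.1 p.2.1 p.2.2) (Icc α β ×ˢ univ))
    {p : ℝ × ℝ × ℝ} (hp : p ∈ Icc α β ×ˢ univ) (a b : ℝ × ℝ × ℝ) :
    lagrangianHessian α β f p a b = lagrangianHessian α β f p b a := by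
  have hS : UniqueDiffOn ℝ (Icc α β ×ˢ (univ : Set (ℝ × ℝ))) :=
    (uniqueDiffOn_Icc hαβ).prod uniqueDiffOn_univ
  have hcl : p ∈ closure (interior (Icc α β ×ˢ (univ : Set (ℝ × ℝ)))) := by
    rwa [interior_prod_eq, interior_Icc, interior_univ, closure_prod_eq, closure_Ioo hαβ.ne,
      closure_univ]
  exact (hf p hp).isSymmSndFDerivWithinAt (by simp [minSmoothness_of_isRCLikeNormedField]) hS
    hcl hp a b

theorem lagrangianHessian_apply_vertical (hαβ : α < β)
    (hf : ContDiffOn ℝ 2 (fun p : ℝ × ℝ × ℝ => f p.1 p.2.1 p.2.2) (Icc α β ×ˢ univ))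
    {x : ℝ} (hx : x ∈ Icc α β) (u v a b : ℝ) :
    lagrangianHessian α β f (x, u, v) (0, a, b) (0, a, b) =
      pY (pY f) x u v * a ^ 2 + 2 * pY (pV f) x u v * a * b + pV (pV f) x u v * b ^ 2 := by
  have hab : ((0, a, b) : ℝ × ℝ × ℝ) = a • (0, 1, 0) + b • (0, 0, 1) := by simp
  rw [pY_pY_eq_lagrangianHessian hαβ hf hx, pY_pV_eq_lagrangianHessian hαβ hf hx,
    pV_pV_eq_lagrangianHessian hαβ hf hx, hab]
  simp only [map_add, map_smul, add_apply, smul_apply,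
    smul_eq_mul, lagrangianHessian_symm hαβ hf (mk_mem_prod hx (mem_univ (u, v))) (0, 0, 1)]
  ring

theorem exists_bound_lagrangianHessian_along (hαβ : α < β)
    (hf : ContDiffOn ℝ 2 (fun p : ℝ × ℝ × ℝ => f p.1 p.2.1 p.2.2) (Icc α β ×ˢ univ))
    {y v φ q : ℝ → ℝ} (hy : ContinuousOn y (Icc α β)) (hv : ContinuousOn v (Icc α β))
    (hφ : ContinuousOn φ (Icc α β)) (hq : ContinuousOn q (Icc α β)) :
    ∃ M, ∀ x ∈ Icc α β, ∀ t ∈ Icc (-1 : ℝ) 1,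
      |lagrangianHessian α β f (x, y x + t * φ x, v x + t * q x) (0, φ x, q x) (0, φ x, q x)|
        ≤ M := by
  have hS : UniqueDiffOn ℝ (Icc α β ×ˢ (univ : Set (ℝ × ℝ))) :=
    (uniqueDiffOn_Icc hαβ).prod uniqueDiffOn_univ
  have hH : ContinuousOn (lagrangianHessian α β f) (Icc α β ×ˢ univ) :=
    (hf.fderivWithin hS (by norm_num)).continuousOn_fderivWithin hS le_rfl
  have hfst : ContinuousOn (fun p : ℝ × ℝ => p.1) (Icc α β ×ˢ Icc (-1 : ℝ) 1) :=
    continuousOn_fst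
  have hsnd : ContinuousOn (fun p : ℝ × ℝ => p.2) (Icc α β ×ˢ Icc (-1 : ℝ) 1) :=
    continuousOn_snd
  have hmaps : MapsTo (fun p : ℝ × ℝ => p.1) (Icc α β ×ˢ Icc (-1 : ℝ) 1) (Icc α β) :=
    fun p hp => hp.1
  have hw : ContinuousOn (fun p : ℝ × ℝ => ((0 : ℝ), φ p.1, q p.1))
      (Icc α β ×ˢ Icc (-1 : ℝ) 1) :=
    continuousOn_const.prodMk ((hφ.comp hfst hmaps).prodMk (hq.comp hfst hmaps))
  have hpt : ContinuousOn (fun p : ℝ × ℝ => (p.1, y p.1 + p.2 * φ p.1, v p.1 + p.2 * q p.1))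
      (Icc α β ×ˢ Icc (-1 : ℝ) 1) :=
    hfst.prodMk (((hy.comp hfst hmaps).add (hsnd.mul (hφ.comp hfst hmaps))).prodMk
      ((hv.comp hfst hmaps).add (hsnd.mul (hq.comp hfst hmaps))))
  obtain ⟨M, hM⟩ := (isCompact_Icc.prod isCompact_Icc).exists_bound_of_continuousOn
    (((hH.comp hpt fun p hp => ⟨hp.1, trivial⟩).clm_apply hw).clm_apply hw)
  exact ⟨M, fun x hx t ht => hM (x, t) ⟨hx, ht⟩⟩

theorem intervalIntegrable_lagrangian_comp (hαβ : α ≤ β)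
    (hf : ContinuousOn (fun p : ℝ × ℝ × ℝ => f p.1 p.2.1 p.2.2) (Icc α β ×ˢ univ))
    {a b : ℝ → ℝ} (ha : ContinuousOn a (Icc α β)) (hb : ContinuousOn b (Icc α β)) :
    IntervalIntegrable (fun x => f x (a x) (b x)) volume α β :=
  ContinuousOn.intervalIntegrable <| (uIcc_of_le hαβ).symm ▸
    hf.comp (continuousOn_id.prodMk (ha.prodMk hb)) fun _ hx => ⟨hx, trivial⟩

theorem integral_lagrangian_le_of_variation (hαβ : α < β) {y φ : ℝ → ℝ}
    (hy : ContDiffOn ℝ 1 y (Icc α β)) (hφ : ContDiffOn ℝ 1 φ (Icc α β)) (hφα : φ α = 0)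
    (hφβ : φ β = 0)
    (hmin : ∀ z : ℝ → ℝ, ContDiffOn ℝ 1 z (Icc α β) → z α = y α → z β = y β →
      (∫ x in α..β, f x (y x) (derivWithin y (Icc α β) x)) ≤
        (∫ x in α..β, f x (z x) (derivWithin z (Icc α β) x))) (t : ℝ) :
    ∫ x in α..β, f x (y x) (derivWithin y (Icc α β) x) ≤
      ∫ x in α..β, f x (y x + t * φ x)
        (derivWithin y (Icc α β) x + t * derivWithin φ (Icc α β) x) := by
  refine (hmin (fun x => y x + t * φ x) (hy.add (contDiffOn_const.mul hφ)) (by simp [hφα])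
    (by simp [hφβ])).trans_eq (integral_congr fun x hx => ?_)
  rw [uIcc_of_le hαβ.le] at hx
  have hderiv : derivWithin (fun x => y x + t * φ x) (Icc α β) x =
      derivWithin y (Icc α β) x + t * derivWithin φ (Icc α β) x :=
    ((hy.differentiableOn one_ne_zero x hx).hasDerivWithinAt.add
      ((hφ.differentiableOn one_ne_zero x hx).hasDerivWithinAt.const_mul t)).derivWithin
      (uniqueDiffOn_Icc hαβ x hx)
  rw [hderiv]

end Lagrangian

/-- **Nonnegativity of the second variation.** If `f : [α, β] × ℝ² → ℝ` is `C²` and the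
`C¹` function `y` minimizes `F(z) = ∫_α^β f (x, z x, z' x) dx` among `C¹` functions `z`
with the same boundary values, then for every `C²` function `φ` on `[α, β]` with
`φ(α) = φ(β) = 0`,
`∫_α^β [(∂²f/∂y²) φ² + 2 (∂²f/∂y∂y') φ φ' + (∂²f/∂y'²) (φ')²] dx ≥ 0`,
the partial derivatives of `f` being evaluated at `(x, y x, y' x)`. -/
theorem second_variation_nonneg
    (α β : ℝ) (hαβ : α < β) (f : ℝ → ℝ → ℝ → ℝ)
    (hf : ContDiffOn ℝ 2 (fun p : ℝ × ℝ × ℝ => f p.1 p.2.1 p.2.2)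
      ((Set.Icc α β) ×ˢ (Set.univ : Set (ℝ × ℝ))))
    (y : ℝ → ℝ) (hy : ContDiffOn ℝ 1 y (Set.Icc α β))
    (hmin : ∀ z : ℝ → ℝ, ContDiffOn ℝ 1 z (Set.Icc α β) → z α = y α → z β = y β →
      (∫ x in α..β, f x (y x) (derivWithin y (Set.Icc α β) x)) ≤
        (∫ x in α..β, f x (z x) (derivWithin z (Set.Icc α β) x))) :
    ∀ φ : ℝ → ℝ, ContDiffOn ℝ 2 φ (Set.Icc α β) → φ α = 0 → φ β = 0 →
      (∫ x in α..β,
        pY (pY f) x (y x) (derivWithin y (Set.Icc α β) x) * (φ x) ^ 2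
        + 2 * pY (pV f) x (y x) (derivWithin y (Set.Icc α β) x)
            * φ x * derivWithin φ (Set.Icc α β) x
        + pV (pV f) x (y x) (derivWithin y (Set.Icc α β) x)
            * (derivWithin φ (Set.Icc α β) x) ^ 2) ≥ 0 := by
  intro φ hφ hφα hφβ
  have hI : uIcc α β = Icc α β := uIcc_of_le hαβ.le
  have hUD : UniqueDiffOn ℝ (Icc α β) := uniqueDiffOn_Icc hαβ
  set v := derivWithin y (Icc α β)
  set q := derivWithin φ (Icc α β)
  have hv : ContinuousOn v (Icc α β) := hy.continuousOn_derivWithin hUD le_rfl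
  have hq : ContinuousOn q (Icc α β) := hφ.continuousOn_derivWithin hUD one_le_two
  have hline : ∀ x t, HasDerivAt (fun s => (y x + s * φ x, v x + s * q x)) (φ x, q x) t :=
    fun x t => by
      simpa using ((hasDerivAt_mul_const (φ x)).const_add (y x)).prodMk
        ((hasDerivAt_mul_const (q x)).const_add (v x))
  obtain ⟨M, hM⟩ := exists_bound_lagrangianHessian_along hαβ hf hy.continuousOn hv
    hφ.continuousOn hq
  have key := integral_secondDeriv_nonneg_of_forall_integral_le
    (fun t => intervalIntegrable_lagrangian_comp hαβ.le hf.continuousOn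
      (hy.continuousOn.add (hφ.continuousOn.const_smul t)) (hv.add (hq.const_smul t)))
    (G' := fun t x => lagrangianFDeriv α β f (x, y x + t * φ x, v x + t * q x) (0, φ x, q x))
    (hI ▸ fun x hx t => hasDerivAt_lagrangian_comp hf hx (hline x t))
    (hI ▸ fun x hx t => hasDerivAt_lagrangianFDeriv_comp_apply hαβ hf hx (hline x t) _)
    (hI ▸ hM)
    (by simpa using integral_lagrangian_le_of_variation hαβ hy (hφ.of_le one_le_two) hφα hφβ hmin)
  refine key.trans_eq (integral_congr fun x hx => ?_)
  rw [hI] at hx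
  simp [lagrangianHessian_apply_vertical hαβ hf hx]
end

section
/- Let α < β be real numbers and let m, g, ℓ be positive real numbers. Suppose θ : [α, β] → ℝ is twice continuously differentiable and minimizes the action functional A(ψ) = ∫_α^β [ (1/2) m ℓ² ψ'(t)² + m g ℓ cos(ψ(t)) ] dt among all continuously differentiable functions ψ : [α, β] → ℝ with ψ(α) = θ(α) and ψ(β) = θ(β). Then for every twice continuously differentiable φ : [α, β] → ℝ with φ^(k)(α) = φ^(k)(β) = 0 for every k ∈ {0, 1, 2}, one has g ∫_α^β cos(θ(t)) φ(t)² dt ≤ ℓ ∫_α^β φ'(t)² dt. -/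
/-!
Perturb the minimizer to `θ ± εφ`; both are admissible, so the symmetric second difference
`A(θ + εφ) + A(θ - εφ) - 2 A(θ)` is nonnegative. Since `cos (θ ± εφ)` sum to `2 cos θ cos (εφ)`
and `cos x = 1 - x²/2 + O(x⁴)` uniformly in `x`, this second difference is at most
`ε² m ℓ (ℓ ∫ φ'² - g ∫ cos θ φ²) + O(ε⁴)`, and letting `ε → 0` gives the inequality.
-/

open MeasureTheory intervalIntegral Real
open Filter Set Topology

lemma cos_le_one_sub_sq_div_two_add_pow_four_div (x : ℝ) :
    cos x ≤ 1 - x ^ 2 / 2 + x ^ 4 / 24 := by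
  obtain ⟨y, rfl⟩ : ∃ y, x = 2 * y := ⟨x / 2, by ring⟩
  have hcos : cos (2 * y) = 1 - 2 * sin y ^ 2 := by rw [sin_sq_eq_half_sub]; ring
  have hsum : |y + sin y| ≤ 2 * |y| :=
    (abs_add_le _ _).trans (by linarith [abs_sin_le_abs (x := y)])
  -- `cos (2y) - (1 - 2y²) = 2 (y - sin y) (y + sin y)`, and `|y - sin y| ≤ |y| ^ 3 / 6`
  have hdiff : y ^ 2 - sin y ^ 2 ≤ |y| ^ 3 / 6 * (2 * |y|) :=
    calc y ^ 2 - sin y ^ 2 ≤ |y - sin y| * |y + sin y| := by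
          rw [← abs_mul]; exact (le_abs_self _).trans_eq' (by ring)
      _ ≤ |y| ^ 3 / 6 * (2 * |y|) :=
          mul_le_mul (abs_sub_sin_le y) hsum (abs_nonneg _) (by positivity)
  have hy4 : |y| ^ 3 / 6 * (2 * |y|) = y ^ 4 / 3 := by
    rw [show |y| ^ 3 / 6 * (2 * |y|) = |y| ^ 4 / 3 by ring, pow_abs,
      abs_of_nonneg (by positivity)]
  linarith

lemma mul_cos_sub_one_le {c : ℝ} (hc : |c| ≤ 1) (x : ℝ) :
    c * (cos x - 1) ≤ -(c * x ^ 2 / 2) + x ^ 4 / 24 := by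
  have hr₀ : 0 ≤ cos x - 1 + x ^ 2 / 2 := by linarith [one_sub_sq_div_two_le_cos (x := x)]
  have hr₁ : cos x - 1 + x ^ 2 / 2 ≤ x ^ 4 / 24 := by
    linarith [cos_le_one_sub_sq_div_two_add_pow_four_div x]
  nlinarith [abs_le.mp hc]

lemma nonneg_of_forall_nonneg_sq_mul_add_pow_four_mul {a b : ℝ}
    (h : ∀ ε : ℝ, 0 ≤ ε ^ 2 * a + ε ^ 4 * b) : 0 ≤ a := by
  have hlim : Tendsto (fun ε : ℝ => a + b * ε ^ 2) (𝓝[≠] 0) (𝓝 a) := by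
    have : Continuous (fun ε : ℝ => a + b * ε ^ 2) := by fun_prop
    simpa using (this.tendsto 0).mono_left nhdsWithin_le_nhds
  refine ge_of_tendsto hlim (eventually_nhdsWithin_of_forall fun ε hε => ?_)
  have hε : 0 < ε ^ 2 := pow_two_pos_of_ne_zero hε
  exact nonneg_of_mul_nonneg_right (a := ε ^ 2) (by linarith [h ε]) hε

noncomputable def pendulumLagrangian (m g ℓ q v : ℝ) : ℝ :=
  1 / 2 * m * ℓ ^ 2 * v ^ 2 + m * g * ℓ * cos q

noncomputable def pendulumAction (m g ℓ α β : ℝ) (ψ : ℝ → ℝ) : ℝ :=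
  ∫ t in α..β, pendulumLagrangian m g ℓ (ψ t) (derivWithin ψ (Icc α β) t)

lemma pendulumLagrangian_second_difference_le {m g ℓ : ℝ} (hmgℓ : 0 ≤ m * g * ℓ)
    (q v x w ε : ℝ) :
    pendulumLagrangian m g ℓ (q + ε * x) (v + ε * w)
        + pendulumLagrangian m g ℓ (q - ε * x) (v - ε * w) - 2 * pendulumLagrangian m g ℓ q v
      ≤ ε ^ 2 * (m * ℓ * (ℓ * w ^ 2 - g * (cos q * x ^ 2)))
        + ε ^ 4 * (m * g * ℓ / 12 * x ^ 4) := by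
  have hcos := mul_le_mul_of_nonneg_left (mul_cos_sub_one_le (abs_cos_le_one q) (ε * x)) hmgℓ
  simp only [pendulumLagrangian, cos_add, cos_sub]
  nlinarith [hcos]

section

variable {m g ℓ α β : ℝ} {θ φ : ℝ → ℝ}

lemma pendulumAction_add_mul (hαβ : α ≤ β) (hθ : DifferentiableOn ℝ θ (Icc α β))
    (hφ : DifferentiableOn ℝ φ (Icc α β)) (δ : ℝ) :
    pendulumAction m g ℓ α β (fun t => θ t + δ * φ t) =
      ∫ t in α..β, pendulumLagrangian m g ℓ (θ t + δ * φ t)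
        (derivWithin θ (Icc α β) t + δ * derivWithin φ (Icc α β) t) := by
  refine integral_congr fun t ht => ?_
  rw [uIcc_of_le hαβ] at ht
  dsimp only
  rw [derivWithin_fun_add (hθ t ht) ((hφ t ht).const_mul δ),
    derivWithin_const_mul δ (hφ t ht)]

lemma pendulumAction_second_difference_le (hαβ : α < β) (hmgℓ : 0 ≤ m * g * ℓ)
    (hθ : ContDiffOn ℝ 1 θ (Icc α β)) (hφ : ContDiffOn ℝ 1 φ (Icc α β)) (ε : ℝ) :
    pendulumAction m g ℓ α β (fun t => θ t + ε * φ t)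
        + pendulumAction m g ℓ α β (fun t => θ t + -ε * φ t) - 2 * pendulumAction m g ℓ α β θ
      ≤ ε ^ 2 * (m * ℓ * (ℓ * (∫ t in α..β, derivWithin φ (Icc α β) t ^ 2)
          - g * ∫ t in α..β, cos (θ t) * φ t ^ 2))
        + ε ^ 4 * (m * g * ℓ / 12 * ∫ t in α..β, φ t ^ 4) := by
  have hs := uniqueDiffOn_Icc hαβ
  have hint : ∀ f : ℝ → ℝ, ContinuousOn f (Icc α β) → IntervalIntegrable f volume α β :=
    fun f hf => hf.intervalIntegrable_of_Icc hαβ.le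
  have hθc := hθ.continuousOn
  have hφc := hφ.continuousOn
  have hθ'c := hθ.continuousOn_derivWithin hs le_rfl
  have hφ'c := hφ.continuousOn_derivWithin hs le_rfl
  have hθd := hθ.differentiableOn one_ne_zero
  have hφd := hφ.differentiableOn one_ne_zero
  rw [pendulumAction_add_mul hαβ.le hθd hφd, pendulumAction_add_mul hαβ.le hθd hφd, pendulumAction]
  set θ' := derivWithin θ (Icc α β)
  set φ' := derivWithin φ (Icc α β)
  have hL : ∀ δ, IntervalIntegrable
      (fun t => pendulumLagrangian m g ℓ (θ t + δ * φ t) (θ' t + δ * φ' t)) volume α β :=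
    fun δ => hint _ (by unfold pendulumLagrangian; fun_prop)
  rw [← integral_add (hL ε) (hL (-ε)), ← intervalIntegral.integral_const_mul,
    ← integral_sub ((hL ε).add (hL (-ε))) (hint _ (by unfold pendulumLagrangian; fun_prop))]
  calc _ ≤ ∫ t in α..β, ε ^ 2 * (m * ℓ * (ℓ * φ' t ^ 2 - g * (cos (θ t) * φ t ^ 2)))
        + ε ^ 4 * (m * g * ℓ / 12 * φ t ^ 4) := by
        refine integral_mono_on hαβ.le (hint _ (by unfold pendulumLagrangian; fun_prop))
          (hint _ (by fun_prop)) fun t _ => ?_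
        simpa only [neg_mul, ← sub_eq_add_neg]
          using pendulumLagrangian_second_difference_le hmgℓ (θ t) (θ' t) (φ t) (φ' t) ε
    _ = _ := by
        rw [integral_add (hint _ (by fun_prop)) (hint _ (by fun_prop))]
        simp only [intervalIntegral.integral_const_mul]
        rw [integral_sub (hint _ (by fun_prop)) (hint _ (by fun_prop))]
        simp only [intervalIntegral.integral_const_mul]

end

/-- **Variational inequality for the simple pendulum.** If `θ` is `C²` on `[α, β]` and
minimizes the action `A(ψ) = ∫_α^β (1/2) m ℓ² ψ'(t)² + m g ℓ cos (ψ t) dt` among `C¹`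
paths `ψ` with the same boundary values, then for every `C²` function `φ` on `[α, β]`
with `φ⁽ᵏ⁾(α) = φ⁽ᵏ⁾(β) = 0` for `k ∈ {0, 1, 2}`,
`g ∫_α^β cos (θ t) φ(t)² dt ≤ ℓ ∫_α^β φ'(t)² dt`. -/
theorem pendulum_variational_inequality
    (α β : ℝ) (hαβ : α < β) (m g ℓ : ℝ) (hm : 0 < m) (hg : 0 < g) (hℓ : 0 < ℓ)
    (θ : ℝ → ℝ) (hθ : ContDiffOn ℝ 2 θ (Set.Icc α β))
    (hmin : ∀ ψ : ℝ → ℝ, ContDiffOn ℝ 1 ψ (Set.Icc α β) → ψ α = θ α → ψ β = θ β →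
      (∫ t in α..β, (1 / 2) * m * ℓ ^ 2 * (derivWithin θ (Set.Icc α β) t) ^ 2
          + m * g * ℓ * Real.cos (θ t)) ≤
        (∫ t in α..β, (1 / 2) * m * ℓ ^ 2 * (derivWithin ψ (Set.Icc α β) t) ^ 2
          + m * g * ℓ * Real.cos (ψ t))) :
    ∀ φ : ℝ → ℝ, ContDiffOn ℝ 2 φ (Set.Icc α β) →
      φ α = 0 → φ β = 0 →
      derivWithin φ (Set.Icc α β) α = 0 → derivWithin φ (Set.Icc α β) β = 0 →
      derivWithin (derivWithin φ (Set.Icc α β)) (Set.Icc α β) α = 0 →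
      derivWithin (derivWithin φ (Set.Icc α β)) (Set.Icc α β) β = 0 →
      g * (∫ t in α..β, Real.cos (θ t) * (φ t) ^ 2) ≤
        ℓ * (∫ t in α..β, (derivWithin φ (Set.Icc α β) t) ^ 2) := by
  intro φ hφ hφα hφβ _ _ _ _
  have hθ₁ : ContDiffOn ℝ 1 θ (Icc α β) := hθ.of_le (by norm_num)
  have hφ₁ : ContDiffOn ℝ 1 φ (Icc α β) := hφ.of_le (by norm_num)
  have hvar (δ : ℝ) : pendulumAction m g ℓ α β θ ≤
      pendulumAction m g ℓ α β (fun t => θ t + δ * φ t) :=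
    hmin _ (hθ₁.add (contDiffOn_const.mul hφ₁)) (by simp [hφα]) (by simp [hφβ])
  have hsecond : 0 ≤ m * ℓ * (ℓ * (∫ t in α..β, derivWithin φ (Icc α β) t ^ 2)
      - g * ∫ t in α..β, cos (θ t) * φ t ^ 2) :=
    nonneg_of_forall_nonneg_sq_mul_add_pow_four_mul fun ε =>
      le_trans (by linarith [hvar ε, hvar (-ε)])
        (pendulumAction_second_difference_le hαβ (by positivity) hθ₁ hφ₁ ε)
  exact sub_nonneg.mp ((mul_nonneg_iff_of_pos_left (mul_pos hm hℓ)).mp hsecond)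
end
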